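/- arXiv:1812.10593 — 7 statements merged into one kernel-verified Lean document; each statement's English description precedes it below -/
import Mathlib

section
/- For every real β with 1 < β ≤ 2 and every x ∈ [0,1], the β-expansion generated by the beta shift reconstructs x: x = (1/2) · Σ_{n=0}^∞ k_n(x) · β^{−n}. -/
/-- The beta shift map `T_β : [0,1] → [0,1]`. -/
noncomputable def betaShift (β : ℝ) (x : ℝ) : ℝ :=
  if x < 1/2 then β * x else β * (x - 1/2)

/-- The digit sequence `k_n(x)` of the beta shift: 0 if the n-th iterate is below 1/2, else 1. -/
noncomputable def betaDigit (β : ℝ) (n : ℕ) (x : ℝ) : ℝ :=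
  if (betaShift β)^[n] x < 1/2 then 0 else 1

/-!
Writing `y n = T_β^[n] x`, the definition of the digits gives `y (n + 1) = β (y n - k_n / 2)`,
so telescoping yields `x = (1/2) ∑_{n<N} k_n β^{-n} + y N β^{-N}`. For `β ≤ 2` the shift maps
`[0, 1]` into itself, so the remainder is at most `β^{-N}` and tends to `0` since `β > 1`.
-/

open Filter Topology Set

theorem hasSum_div_pow_of_succ_eq_mul_sub {β C : ℝ} (hβ : 1 < β) {y d : ℕ → ℝ}
    (hstep : ∀ n, y (n + 1) = β * (y n - d n)) (hy : ∀ n, |y n| ≤ C) (hd : ∀ n, 0 ≤ d n) :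
    HasSum (fun n => d n / β ^ n) (y 0) := by
  have hβ0 : 0 < β := one_pos.trans hβ
  have hterm : ∀ n, d n / β ^ n = y n / β ^ n - y (n + 1) / β ^ (n + 1) := by
    intro n
    rw [hstep, pow_succ]
    field_simp
    ring
  have hpartial : ∀ N, ∑ n ∈ Finset.range N, d n / β ^ n = y 0 - y N / β ^ N := by
    intro N
    simp only [hterm, Finset.sum_range_sub', pow_zero, div_one]
  have hrem : Tendsto (fun N => y N / β ^ N) atTop (𝓝 0) := by
    have hgeom : Tendsto (fun N : ℕ => C * β⁻¹ ^ N) atTop (𝓝 0) := by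
      simpa using (tendsto_pow_atTop_nhds_zero_of_lt_one (by positivity)
        (inv_lt_one_of_one_lt₀ hβ)).const_mul C
    refine squeeze_zero_norm (fun N => ?_) hgeom
    rw [Real.norm_eq_abs, abs_div, abs_of_pos (pow_pos hβ0 N), inv_pow, ← div_eq_mul_inv]
    exact div_le_div_of_nonneg_right (hy N) (pow_pos hβ0 N).le
  refine (hasSum_iff_tendsto_nat_of_nonneg (fun n => div_nonneg (hd n) (pow_pos hβ0 n).le) _).2 ?_
  simpa [hpartial] using (tendsto_const_nhds (x := y 0)).sub hrem

theorem betaShift_mapsTo_Icc {β : ℝ} (hβ0 : 0 ≤ β) (hβ2 : β ≤ 2) :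
    MapsTo (betaShift β) (Icc 0 1) (Icc 0 1) := by
  rintro y ⟨hy0, hy1⟩
  unfold betaShift
  split_ifs with h
  · exact ⟨by positivity, by nlinarith⟩
  · exact ⟨by nlinarith, by nlinarith⟩

theorem betaShift_iterate_succ (β x : ℝ) (n : ℕ) :
    (betaShift β)^[n + 1] x = β * ((betaShift β)^[n] x - betaDigit β n x / 2) := by
  rw [Function.iterate_succ_apply', betaShift, betaDigit]
  split_ifs <;> ring

theorem betaDigit_nonneg (β x : ℝ) (n : ℕ) : 0 ≤ betaDigit β n x := by
  unfold betaDigit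
  split_ifs <;> norm_num

/-- the β-expansion generated by the beta shift reconstructs `x`. -/
theorem beta_expansion_reconstructs (β : ℝ) (hβ1 : 1 < β) (hβ2 : β ≤ 2)
    (x : ℝ) (hx0 : 0 ≤ x) (hx1 : x ≤ 1) :
    x = (1/2) * ∑' n : ℕ, betaDigit β n x / β ^ n := by
  have horbit : ∀ n, (betaShift β)^[n] x ∈ Icc (0 : ℝ) 1 := fun n =>
    ((betaShift_mapsTo_Icc (one_pos.trans hβ1).le hβ2).iterate n) ⟨hx0, hx1⟩
  have hsum := hasSum_div_pow_of_succ_eq_mul_sub (C := 1) hβ1 (betaShift_iterate_succ β x)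
    (fun n => abs_le.2 ⟨by linarith [(horbit n).1], (horbit n).2⟩)
    (fun n => div_nonneg (betaDigit_nonneg β x n) zero_le_two)
  calc x = ∑' n : ℕ, betaDigit β n x / 2 / β ^ n := hsum.tsum_eq.symm
    _ = _ := by rw [← tsum_mul_left]; exact tsum_congr fun n => by ring
end

section
/- Functional equation for the compressor: for real β with 1 < β ≤ 2 and every y with 0 ≤ y < β/2, one has cpr_β(y/β) + cpr_β(1/2 + y/β) = 1/2 + cpr_β(y). -/
/-- The compressor function `cpr_β(y) = Σ_n k_n(y) 2^{-(n+1)}`. -/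
noncomputable def cpr (β : ℝ) (y : ℝ) : ℝ := ∑' n : ℕ, betaDigit β n y / 2 ^ (n + 1)

/-! Both `y / β` and `1/2 + y / β` are mapped to `y` by the beta shift, and their leading digits
are `0` and `1`. Since `cpr β x = (k₀(x) + cpr β (T_β x)) / 2`, the two compressor values add up to
`(0 + 1) / 2 + cpr β y`. -/

lemma betaShift_of_lt_half {β x : ℝ} (hx : x < 1/2) : betaShift β x = β * x := if_pos hx

lemma betaShift_half_add {β x : ℝ} (hx : 0 ≤ x) : betaShift β (1/2 + x) = β * x := by
  rw [betaShift, if_neg (by linarith), add_sub_cancel_left]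

lemma betaDigit_zero_of_lt_half {β x : ℝ} (hx : x < 1/2) : betaDigit β 0 x = 0 := if_pos hx

lemma betaDigit_zero_half_add {β x : ℝ} (hx : 0 ≤ x) : betaDigit β 0 (1/2 + x) = 1 :=
  if_neg (by simp only [Function.iterate_zero, id]; linarith)

lemma betaDigit_succ (β : ℝ) (n : ℕ) (x : ℝ) :
    betaDigit β (n + 1) x = betaDigit β n (betaShift β x) := by
  rw [betaDigit, betaDigit, Function.iterate_succ_apply]

lemma betaDigit_mem_Icc (β : ℝ) (n : ℕ) (x : ℝ) : betaDigit β n x ∈ Set.Icc 0 1 := by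
  unfold betaDigit; split_ifs <;> norm_num

lemma summable_betaDigit_div_two_pow (β x : ℝ) :
    Summable (fun n : ℕ => betaDigit β n x / 2 ^ (n + 1)) := by
  refine (summable_geometric_two.mul_right (1 / 2)).of_nonneg_of_le (fun n => ?_) (fun n => ?_)
  · exact div_nonneg (betaDigit_mem_Icc β n x).1 (by positivity)
  · exact (div_le_div_of_nonneg_right (betaDigit_mem_Icc β n x).2 (by positivity)).trans_eq
      (by rw [pow_succ, one_div, mul_inv, one_div, inv_pow])

lemma cpr_eq_betaDigit_zero_add_cpr_betaShift (β x : ℝ) :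
    cpr β x = (betaDigit β 0 x + cpr β (betaShift β x)) / 2 := by
  rw [cpr, (summable_betaDigit_div_two_pow β x).tsum_eq_zero_add, cpr, add_div, ← tsum_div_const]
  simp only [betaDigit_succ, pow_succ, zero_add, pow_zero, one_mul, div_div]

lemma cpr_add_cpr_half_add {β x : ℝ} (hx0 : 0 ≤ x) (hx1 : x < 1/2) :
    cpr β x + cpr β (1/2 + x) = 1/2 + cpr β (β * x) := by
  rw [cpr_eq_betaDigit_zero_add_cpr_betaShift β x,
    cpr_eq_betaDigit_zero_add_cpr_betaShift β (1/2 + x), betaShift_of_lt_half hx1,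
    betaShift_half_add hx0, betaDigit_zero_of_lt_half hx1, betaDigit_zero_half_add hx0]
  ring

theorem compressor_functional_equation_general (β : ℝ) (hβ1 : 1 < β)
    (y : ℝ) (hy0 : 0 ≤ y) (hy1 : y < β / 2) :
    cpr β (y / β) + cpr β (1/2 + y / β) = 1/2 + cpr β y := by
  have hβ0 : 0 < β := by linarith
  have hyβ : y / β < 1/2 := by rw [div_lt_iff₀ hβ0]; linarith
  simpa only [mul_div_cancel₀ y hβ0.ne'] using cpr_add_cpr_half_add (β := β) (by positivity) hyβ

/-- functional equation for the compressor. -/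
theorem compressor_functional_equation (β : ℝ) (hβ1 : 1 < β) (hβ2 : β ≤ 2)
    (y : ℝ) (hy0 : 0 ≤ y) (hy1 : y < β / 2) :
    cpr β (y / β) + cpr β (1/2 + y / β) = 1/2 + cpr β y :=
  compressor_functional_equation_general β hβ1 y hy0 hy1
end

section
/- Nilpotent exponential subspaces of the transfer operator: let N ≥ 1 and m ≥ 0 be integers, let β = (2m+1)^{1/N} be the positive real N-th root of the odd integer 2m+1, let l be an integer and z a complex number. Define φ : ℝ → ℂ by φ(x) = Σ_{n=0}^{N} z^n · exp(2πi(2l+1)β^n x). Then the N-fold application of P_β annihilates φ: (P_β)^N φ = 0 identically. -/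
/-!
Write `e_ν(x) = exp(2πiνx)`. Then `P_β e_ν = β⁻¹ (1 + exp(πiν)) e_{ν/β}`, and the factor vanishes
exactly when `ν` is an odd integer. With `μ = 2l+1`, `P_β` therefore lowers `e_{μβⁿ}` to a multiple of
`e_{μβⁿ⁻¹}` and kills `e_μ`, so `P_β^N` kills the modes `n < N`; the top mode `e_{μβ^N}` is killed at
once, since `μβ^N = (2l+1)(2m+1)` is odd as well.
-/

open Complex Finset Real

noncomputable section

namespace NilpotentCoherentStates

def transferOp (β : ℝ) : Module.End ℂ (ℝ → ℂ) where
  toFun f y := (1 / (β : ℂ)) * (f (y / β) + f (y / β + 1 / 2))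
  map_add' f g := by
    funext y
    simp only [Pi.add_apply]
    ring
  map_smul' c f := by
    funext y
    simp only [Pi.smul_apply, smul_eq_mul, RingHom.id_apply]
    ring

def expMode (ν : ℂ) (x : ℝ) : ℂ := exp (2 * π * I * ν * x)

theorem exp_pi_mul_I_mul_odd (j : ℤ) : exp (π * I * ((2 * j + 1 : ℤ) : ℂ)) = -1 := by
  rw [mul_comm, exp_int_mul, exp_pi_mul_I, Odd.neg_one_zpow (odd_two_mul_add_one j)]

theorem transferOp_expMode (β : ℝ) (ν : ℂ) :
    transferOp β (expMode ν) = ((1 / (β : ℂ)) * (1 + exp (π * I * ν))) • expMode (ν / β) := by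
  funext y
  have hshift : expMode ν (y / β + 1 / 2) = expMode ν (y / β) * exp (π * I * ν) := by
    rw [expMode, expMode, ← Complex.exp_add]
    push_cast
    ring_nf
  have hscale : expMode ν (y / β) = expMode (ν / β) y := by
    simp only [expMode, ofReal_div]
    ring_nf
  change (1 / (β : ℂ)) * (expMode ν (y / β) + expMode ν (y / β + 1 / 2)) = _
  rw [hshift, hscale, Pi.smul_apply, smul_eq_mul]
  ring

theorem transferOp_expMode_eq_zero (β : ℝ) {ν : ℂ} (hν : exp (π * I * ν) = -1) :
    transferOp β (expMode ν) = 0 := by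
  rw [transferOp_expMode, hν, add_neg_cancel, mul_zero, zero_smul]

theorem transferOp_pow_expMode_eq_zero {β : ℝ} (hβ : β ≠ 0) {ν : ℂ}
    (hν : exp (π * I * ν) = -1) {n k : ℕ} (hnk : n < k) :
    (transferOp β ^ k) (expMode (ν * β ^ n)) = 0 := by
  induction n generalizing k with
  | zero =>
    obtain ⟨k, rfl⟩ := Nat.exists_eq_add_of_lt hnk
    rw [pow_succ, Module.End.mul_apply, pow_zero, mul_one, transferOp_expMode_eq_zero β hν, map_zero]
  | succ n ih =>
    obtain ⟨k, rfl⟩ := Nat.exists_eq_add_of_lt hnk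
    have hlower : ν * (β : ℂ) ^ (n + 1) / β = ν * (β : ℂ) ^ n := by
      rw [pow_succ, ← mul_assoc, mul_div_cancel_right₀ _ (ofReal_ne_zero.mpr hβ)]
    rw [pow_succ, Module.End.mul_apply, transferOp_expMode, hlower, map_smul, ih (by omega),
      smul_zero]

end NilpotentCoherentStates

open NilpotentCoherentStates in
theorem nilpotent_coherent_states_general (N : ℕ) (hN : 1 ≤ N) (m : ℕ) (β : ℝ)
    (hβ : β ^ N = 2 * (m : ℝ) + 1) (l : ℤ) (z : ℂ) (φ : ℝ → ℂ)
    (hφ : ∀ x : ℝ, φ x = ∑ n ∈ Finset.range (N+1),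
        z ^ n * Complex.exp (2 * (Real.pi : ℂ) * Complex.I *
          ((2 * l + 1 : ℤ) : ℂ) * (β : ℂ) ^ n * (x : ℂ))) :
    (fun f : ℝ → ℂ => fun y : ℝ => (1/(β : ℂ)) * (f (y/β) + f (y/β + 1/2)))^[N] φ
      = fun _ => 0 := by
  have hβ0 : β ≠ 0 := by
    rintro rfl
    rw [zero_pow (by omega)] at hβ
    linarith [(m.cast_nonneg : (0 : ℝ) ≤ m)]
  set μ : ℂ := ((2 * l + 1 : ℤ) : ℂ)
  have hφ' : φ = ∑ n ∈ range (N + 1), z ^ n • expMode (μ * β ^ n) := by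
    funext x
    simp only [hφ, expMode, Finset.sum_apply, Pi.smul_apply, smul_eq_mul, mul_assoc]
  have htop : μ * β ^ N = ((2 * (l * (2 * m + 1) + m) + 1 : ℤ) : ℂ) := by
    rw [← ofReal_pow, hβ]
    push_cast [μ]
    ring
  change (transferOp β)^[N] φ = 0
  rw [← Module.End.coe_pow, hφ', map_sum]
  refine sum_eq_zero fun n hn => ?_
  rw [map_smul]
  rcases (Nat.lt_succ_iff.mp (mem_range.mp hn)).lt_or_eq with hlt | hn_top
  · rw [transferOp_pow_expMode_eq_zero hβ0 (exp_pi_mul_I_mul_odd l) hlt, smul_zero]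
  · rw [hn_top]
    have hodd : exp (π * I * (μ * β ^ N)) = -1 := by
      rw [htop]
      exact exp_pi_mul_I_mul_odd _
    have hmode := transferOp_pow_expMode_eq_zero hβ0 hodd (by omega : 0 < N)
    rw [pow_zero, mul_one] at hmode
    rw [hmode, smul_zero]

/-- nilpotent exponential subspaces of the transfer operator. If `β` is the
positive real `N`-th root of the odd integer `2m+1`, then the coherent state
`φ(x) = Σ_{n=0}^{N} z^n exp(2πi(2l+1) β^n x)` is annihilated by `N` applications of `P_β`. -/
theorem nilpotent_coherent_states (N : ℕ) (hN : 1 ≤ N) (m : ℕ) (β : ℝ) (hβpos : 0 < β)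
    (hβ : β ^ N = 2 * (m : ℝ) + 1) (l : ℤ) (z : ℂ) (φ : ℝ → ℂ)
    (hφ : ∀ x : ℝ, φ x = ∑ n ∈ Finset.range (N+1),
        z ^ n * Complex.exp (2 * (Real.pi : ℂ) * Complex.I *
          ((2 * l + 1 : ℤ) : ℂ) * (β : ℂ) ^ n * (x : ℂ))) :
    (fun f : ℝ → ℂ => fun y : ℝ => (1/(β : ℂ)) * (f (y/β) + f (y/β + 1/2)))^[N] φ
      = fun _ => 0 :=
  nilpotent_coherent_states_general N hN m β hβ l z φ hφ
end
end

section
/- Each admissible β-polynomial has a unique positive real root, lying strictly between 1 and 2: let k ≥ 1 and let b_0, b_1, …, b_k ∈ {0,1} with b_0 = 1 and b_k = 1. Then the polynomial p(z) = z^{k+1} − b_0 z^k − b_1 z^{k−1} − ⋯ − b_{k−1} z − b_k has exactly one root in the positive reals, and this root lies in the open interval (1, 2). -/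
/-!
Substituting `x = 1 / s`, a positive `s` is a root of `p` exactly when `q x = 1`, where
`q x = b₀ x + b₁ x² + ⋯ + b_k x^{k+1}`. On `[0, ∞)` the function `q` is continuous and strictly
increasing (its coefficients are nonnegative and `b₀ = 1`), so `q x = 1` has at most one solution.
Since all `b_j ≤ 1`, `q (1/2) < ∑ 2^{-(j+1)} < 1`, and since `b₀ = b_k = 1` with `k ≠ 0`,
`q 1 ≥ 2`; the intermediate value theorem gives the solution `x ∈ (1/2, 1)`, i.e. `s ∈ (1, 2)`.
-/

open Finset

noncomputable def weightedPowSum (c : ℕ → ℝ) (n : ℕ) (x : ℝ) : ℝ :=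
  ∑ j ∈ range n, c j * x ^ (j + 1)

namespace weightedPowSum

theorem continuous (c : ℕ → ℝ) (n : ℕ) : Continuous (weightedPowSum c n) :=
  continuous_finsetSum _ fun _ _ => continuous_const.mul (continuous_pow _)

theorem strictMonoOn {c : ℕ → ℝ} {n i : ℕ} (hc : ∀ j ∈ range n, 0 ≤ c j) (hi : i ∈ range n)
    (hci : 0 < c i) : StrictMonoOn (weightedPowSum c n) (Set.Ici 0) := by
  intro x hx y _ hxy
  refine sum_lt_sum (fun j hj => ?_) ⟨i, hi, ?_⟩
  · exact mul_le_mul_of_nonneg_left (pow_le_pow_left₀ hx hxy.le _) (hc j hj)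
  · exact mul_lt_mul_of_pos_left (pow_lt_pow_left₀ hxy hx (Nat.succ_ne_zero i)) hci

theorem apply_half_lt_one {c : ℕ → ℝ} {n : ℕ} (hc : ∀ j ∈ range n, c j ≤ 1) :
    weightedPowSum c n 2⁻¹ < 1 := by
  have hgeom : ∑ j ∈ range n, (2⁻¹ : ℝ) ^ (j + 1) = 1 - 2⁻¹ ^ n := by
    simp_rw [pow_succ, ← sum_mul, geom_sum_eq (by norm_num : (2⁻¹ : ℝ) ≠ 1)]
    field_simp
    ring
  calc weightedPowSum c n 2⁻¹ ≤ ∑ j ∈ range n, (2⁻¹ : ℝ) ^ (j + 1) :=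
        sum_le_sum fun j hj => mul_le_of_le_one_left (by positivity) (hc j hj)
    _ < 1 := by rw [hgeom]; linarith [pow_pos (by norm_num : (0 : ℝ) < 2⁻¹) n]

theorem add_le_apply_one {c : ℕ → ℝ} {n i j : ℕ} (hc : ∀ j ∈ range n, 0 ≤ c j) (hi : i ∈ range n)
    (hj : j ∈ range n) (hij : i ≠ j) : c i + c j ≤ weightedPowSum c n 1 := by
  simpa [weightedPowSum] using add_le_sum hc hi hj hij

theorem pow_succ_sub_sum_eq_mul (c : ℕ → ℝ) {s : ℝ} (hs : s ≠ 0) (k : ℕ) :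
    s ^ (k + 1) - ∑ j ∈ range (k + 1), c j * s ^ (k - j)
      = s ^ (k + 1) * (1 - weightedPowSum c (k + 1) s⁻¹) := by
  rw [mul_sub, mul_one, weightedPowSum, mul_sum]
  congr 1
  refine sum_congr rfl fun j hj => ?_
  have hjk : k + 1 = (k - j) + (j + 1) := by
    have := mem_range.mp hj
    omega
  rw [inv_pow, hjk, pow_add, mul_left_comm, mul_assoc, mul_inv_cancel₀ (pow_ne_zero _ hs),
    mul_one]

theorem pow_succ_sub_sum_eq_zero_iff (c : ℕ → ℝ) {s : ℝ} (hs : 0 < s) (k : ℕ) :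
    s ^ (k + 1) - ∑ j ∈ range (k + 1), c j * s ^ (k - j) = 0 ↔
      weightedPowSum c (k + 1) s⁻¹ = 1 := by
  rw [pow_succ_sub_sum_eq_mul c hs.ne', mul_eq_zero, sub_eq_zero, eq_comm (a := (1 : ℝ))]
  simp [hs.ne']

end weightedPowSum

open weightedPowSum in
/-- each admissible β-polynomial
`p(z) = z^{k+1} - b_0 z^k - ⋯ - b_{k-1} z - b_k` (bits with `b_0 = b_k = 1`)
has exactly one positive real root, and this root lies in the open interval (1,2). -/
theorem beta_polynomial_unique_positive_root (k : ℕ) (hk : 1 ≤ k)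
    (b : ℕ → ℕ) (hb : ∀ j, j ≤ k → b j = 0 ∨ b j = 1) (hb0 : b 0 = 1) (hbk : b k = 1) :
    ∃ r : ℝ, 1 < r ∧ r < 2 ∧
      (r ^ (k+1) - ∑ j ∈ Finset.range (k+1), (b j : ℝ) * r ^ (k - j) = 0) ∧
      ∀ s : ℝ, 0 < s →
        s ^ (k+1) - ∑ j ∈ Finset.range (k+1), (b j : ℝ) * s ^ (k - j) = 0 → s = r := by
  set q := weightedPowSum (fun j => (b j : ℝ)) (k + 1)
  have hb_le : ∀ j ∈ range (k + 1), (b j : ℝ) ≤ 1 := fun j hj => by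
    rcases hb j (Nat.lt_succ_iff.mp (mem_range.mp hj)) with h | h <;> simp [h]
  have h0 : 0 ∈ range (k + 1) := mem_range.mpr k.succ_pos
  have hmono : StrictMonoOn q (Set.Ici 0) :=
    strictMonoOn (fun _ _ => Nat.cast_nonneg _) h0 (by simp [hb0])
  have hq1 : 1 < q 1 := by
    have : (b 0 : ℝ) + b k ≤ q 1 :=
      add_le_apply_one (fun _ _ => Nat.cast_nonneg _) h0 (self_mem_range_succ k) (by omega)
    simp only [hb0, hbk, Nat.cast_one] at this
    linarith
  obtain ⟨t, ⟨ht_half, ht_one⟩, hqt⟩ :=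
    intermediate_value_Ioo (by norm_num) (continuous _ _).continuousOn
      ⟨apply_half_lt_one hb_le, hq1⟩
  have ht : 0 < t := lt_trans (by norm_num) ht_half
  refine ⟨t⁻¹, (one_lt_inv₀ ht).mpr ht_one, (inv_lt_comm₀ ht two_pos).mpr ht_half,
    (pow_succ_sub_sum_eq_zero_iff _ (inv_pos.mpr ht) k).mpr (by rwa [inv_inv]),
    fun s hs hroot => ?_⟩
  rw [pow_succ_sub_sum_eq_zero_iff _ hs k] at hroot
  rw [← inv_inv s, hmono.injOn (inv_pos.mpr hs).le ht.le (hroot.trans hqt.symm)]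
end

section
/- Ratios of consecutive beta-Fibonacci numbers converge to the positive root: let k ≥ 1 and b_0, …, b_k ∈ {0,1} with b_0 = 1 and b_k = 1, define F : ℕ → ℕ by F_m = 0 for m < k, F_k = 1, and F_m = Σ_{j=1}^{k+1} b_{j−1} F_{m−j} for m > k, and let r be the unique positive real root of z^{k+1} − Σ_{j=0}^{k} b_j z^{k−j}. Then F_m > 0 for all m ≥ k and lim_{m→∞} F_{m+1}/F_m = r. -/
open Filter Finset Topology

/-!
Dividing by `r ^ m` turns the recurrence into `u n = ∑ p j * u (n - (j + 1))` with weights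
`p j = b j / r ^ (j + 1) ≥ 0` summing to `1` (this is the root equation), so each term is a
weighted average of the preceding `k + 1`. Hence the maximum of a window of `k + 1` consecutive
terms decreases and the minimum increases; and since `p 0 > 0`, after a window has reached its
minimum the next `k` terms stay below the maximum by at least `p 0 ^ k` times the gap, so the
gap between window maximum and minimum shrinks geometrically every `2k` steps. Thus `F m / r ^ m` converges to a positive limit, and
the ratios converge to `r`.
-/

theorem Finset.sum_mul_le_of_forall_le {ι : Type*} {s : Finset ι} {p x : ι → ℝ} {B : ℝ}
    (hp : ∀ i ∈ s, 0 ≤ p i) (hsum : ∑ i ∈ s, p i = 1) (hx : ∀ i ∈ s, x i ≤ B) :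
    ∑ i ∈ s, p i * x i ≤ B :=
  calc ∑ i ∈ s, p i * x i ≤ ∑ i ∈ s, p i * B :=
        sum_le_sum fun i hi => mul_le_mul_of_nonneg_left (hx i hi) (hp i hi)
    _ = B := by rw [← sum_mul, hsum, one_mul]

theorem Finset.le_sum_mul_of_forall_le {ι : Type*} {s : Finset ι} {p x : ι → ℝ} {B : ℝ}
    (hp : ∀ i ∈ s, 0 ≤ p i) (hsum : ∑ i ∈ s, p i = 1) (hx : ∀ i ∈ s, B ≤ x i) :
    B ≤ ∑ i ∈ s, p i * x i :=
  calc B = ∑ i ∈ s, p i * B := by rw [← sum_mul, hsum, one_mul]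
    _ ≤ ∑ i ∈ s, p i * x i :=
        sum_le_sum fun i hi => mul_le_mul_of_nonneg_left (hx i hi) (hp i hi)

def windowMax (u : ℕ → ℝ) (k m : ℕ) : ℝ :=
  (range (k + 1)).sup' nonempty_range_add_one fun i => u (m + i)

def windowMin (u : ℕ → ℝ) (k m : ℕ) : ℝ :=
  (range (k + 1)).inf' nonempty_range_add_one fun i => u (m + i)

section Window

variable {u : ℕ → ℝ} {k : ℕ}

theorem le_windowMax (m : ℕ) {i : ℕ} (hi : i ≤ k) : u (m + i) ≤ windowMax u k m :=
  le_sup' (fun i => u (m + i)) (mem_range.2 (by omega))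

theorem windowMin_le (m : ℕ) {i : ℕ} (hi : i ≤ k) : windowMin u k m ≤ u (m + i) :=
  inf'_le (fun i => u (m + i)) (mem_range.2 (by omega))

theorem self_le_windowMax (m : ℕ) : u m ≤ windowMax u k m :=
  le_windowMax (i := 0) m k.zero_le

theorem windowMin_le_self (m : ℕ) : windowMin u k m ≤ u m :=
  windowMin_le (i := 0) m k.zero_le

end Window

structure AveragingRecurrence (k : ℕ) (p u : ℕ → ℝ) : Prop where
  nonneg : ∀ j ∈ range (k + 1), 0 ≤ p j
  sum_eq_one : ∑ j ∈ range (k + 1), p j = 1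
  apply_eq : ∀ n, k < n → u n = ∑ j ∈ range (k + 1), p j * u (n - (j + 1))

namespace AveragingRecurrence

variable {k : ℕ} {p u : ℕ → ℝ}

theorem apply_le_of_forall_le (h : AveragingRecurrence k p u) {n : ℕ} {B : ℝ} (hn : k < n)
    (hB : ∀ j ≤ k, u (n - (j + 1)) ≤ B) : u n ≤ B := by
  rw [h.apply_eq n hn]
  exact sum_mul_le_of_forall_le h.nonneg h.sum_eq_one fun j hj =>
    hB j (by simpa [Nat.lt_succ_iff] using hj)

theorem le_apply_of_forall_le (h : AveragingRecurrence k p u) {n : ℕ} {B : ℝ} (hn : k < n)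
    (hB : ∀ j ≤ k, B ≤ u (n - (j + 1))) : B ≤ u n := by
  rw [h.apply_eq n hn]
  exact le_sum_mul_of_forall_le h.nonneg h.sum_eq_one fun j hj =>
    hB j (by simpa [Nat.lt_succ_iff] using hj)

theorem antitone_windowMax (h : AveragingRecurrence k p u) : Antitone (windowMax u k) := by
  refine antitone_nat_of_succ_le fun m => sup'_le _ _ fun i hi => ?_
  rcases (Nat.lt_succ_iff.1 (mem_range.1 hi)).lt_or_eq with hik | rfl
  · rw [show m + 1 + i = m + (i + 1) by omega]
    exact le_windowMax m hik
  · refine h.apply_le_of_forall_le (by omega) fun j hj => ?_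
    rw [show m + 1 + i - (j + 1) = m + (i - j) by omega]
    exact le_windowMax m (by omega)

theorem monotone_windowMin (h : AveragingRecurrence k p u) : Monotone (windowMin u k) := by
  refine monotone_nat_of_le_succ fun m => le_inf' _ _ fun i hi => ?_
  rcases (Nat.lt_succ_iff.1 (mem_range.1 hi)).lt_or_eq with hik | rfl
  · rw [show m + 1 + i = m + (i + 1) by omega]
    exact windowMin_le m hik
  · refine h.le_apply_of_forall_le (by omega) fun j hj => ?_
    rw [show m + 1 + i - (j + 1) = m + (i - j) by omega]
    exact windowMin_le m (by omega)

theorem le_windowMax_of_le (h : AveragingRecurrence k p u) {m n : ℕ} (hmn : m ≤ n) :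
    u n ≤ windowMax u k m :=
  self_le_windowMax n |>.trans (h.antitone_windowMax hmn)

theorem windowMin_le_of_le (h : AveragingRecurrence k p u) {m n : ℕ} (hmn : m ≤ n) :
    windowMin u k m ≤ u n :=
  (h.monotone_windowMin hmn).trans (windowMin_le_self n)

theorem windowMin_le_windowMax (h : AveragingRecurrence k p u) (m n : ℕ) :
    windowMin u k m ≤ windowMax u k n :=
  (h.windowMin_le_of_le (le_max_left m n)).trans (h.le_windowMax_of_le (le_max_right m n))

/-- Since the weight `p 0` falls on the preceding term, each step keeps at least a fraction `p 0`
of the gap between `u n` and the window maximum. -/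
theorem apply_add_le (h : AveragingRecurrence k p u) {m n : ℕ} (hn : m + k ≤ n) (t : ℕ) :
    u (n + t) ≤ windowMax u k m - p 0 ^ t * (windowMax u k m - u n) := by
  set M := windowMax u k m
  induction t with
  | zero => simp
  | succ t ih =>
    have hsum := h.sum_eq_one
    rw [sum_range_succ'] at hsum
    have hrest : ∑ j ∈ range k, p (j + 1) * u (n + (t + 1) - (j + 1 + 1)) ≤ (1 - p 0) * M :=
      calc _ ≤ ∑ j ∈ range k, p (j + 1) * M :=
            sum_le_sum fun j hj => mul_le_mul_of_nonneg_left
              (h.le_windowMax_of_le (by simp at hj; omega))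
              (h.nonneg _ (by simp at hj ⊢; omega))
        _ = (1 - p 0) * M := by rw [← sum_mul]; congr 1; linarith
    have hfirst : p 0 * u (n + t) ≤ p 0 * (M - p 0 ^ t * (M - u n)) :=
      mul_le_mul_of_nonneg_left ih (h.nonneg 0 (by simp))
    rw [h.apply_eq _ (by omega), sum_range_succ', show n + (t + 1) - (0 + 1) = n + t by omega]
    linear_combination hrest + hfirst

theorem weight_zero_le_one (h : AveragingRecurrence k p u) : p 0 ≤ 1 :=
  h.sum_eq_one ▸ single_le_sum h.nonneg (mem_range.2 k.succ_pos)

theorem windowMax_le (h : AveragingRecurrence k p u) {m n : ℕ} (hn : m + k ≤ n) :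
    windowMax u k n ≤ windowMax u k m - p 0 ^ k * (windowMax u k m - u n) := by
  have hp0 := h.nonneg 0 (by simp)
  have hgap : 0 ≤ windowMax u k m - u n := sub_nonneg.2 (h.le_windowMax_of_le (by omega))
  refine sup'_le _ _ fun t ht => (h.apply_add_le hn t).trans <| sub_le_sub_left
    (mul_le_mul_of_nonneg_right (pow_le_pow_of_le_one hp0 h.weight_zero_le_one
      (by simpa [Nat.lt_succ_iff] using ht)) hgap) _

theorem windowMax_sub_windowMin_le (h : AveragingRecurrence k p u) (m : ℕ) :
    windowMax u k (m + 2 * k) - windowMin u k (m + 2 * k) ≤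
      (1 - p 0 ^ k) * (windowMax u k m - windowMin u k m) := by
  obtain ⟨i, hi, hmin⟩ := exists_mem_eq_inf' nonempty_range_add_one fun i => u (m + k + i)
  have hik : i ≤ k := by simpa [Nat.lt_succ_iff] using hi
  change windowMin u k (m + k) = u (m + k + i) at hmin
  have hpk : p 0 ^ k ≤ 1 := pow_le_one₀ (h.nonneg 0 (by simp)) h.weight_zero_le_one
  have hmax : windowMax u k (m + 2 * k) ≤ windowMax u k (m + k + i) :=
    h.antitone_windowMax (by omega)
  have hmin' : windowMin u k (m + k) ≤ windowMin u k (m + 2 * k) :=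
    h.monotone_windowMin (by omega)
  have hmin0 : windowMin u k m ≤ windowMin u k (m + k) := h.monotone_windowMin (by omega)
  nlinarith [h.windowMax_le (m := m) (n := m + k + i) (by omega)]

theorem exists_tendsto (h : AveragingRecurrence k p u) (hp0 : 0 < p 0) :
    ∃ L, Tendsto u atTop (𝓝 L) ∧ ∀ m, windowMin u k m ≤ L := by
  have hbdd : BddAbove (Set.range (windowMin u k)) :=
    ⟨windowMax u k 0, Set.forall_mem_range.2 fun m => h.windowMin_le_windowMax m 0⟩
  have hM := tendsto_atTop_ciInf h.antitone_windowMax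
    ⟨windowMin u k 0, Set.forall_mem_range.2 (h.windowMin_le_windowMax 0)⟩
  have hμ := tendsto_atTop_ciSup h.monotone_windowMin hbdd
  set L := ⨅ m, windowMax u k m
  set l := ⨆ m, windowMin u k m
  have hlL : l ≤ L := le_of_tendsto_of_tendsto' hμ hM fun m => h.windowMin_le_windowMax m m
  have hshift := tendsto_add_atTop_nat (2 * k)
  have hgap : L - l ≤ (1 - p 0 ^ k) * (L - l) :=
    le_of_tendsto_of_tendsto' ((hM.comp hshift).sub (hμ.comp hshift))
      (tendsto_const_nhds.mul (hM.sub hμ)) h.windowMax_sub_windowMin_le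
  have hl_eq : l = L := by nlinarith [pow_pos hp0 k]
  refine ⟨L, tendsto_of_tendsto_of_tendsto_of_le_of_le (hl_eq ▸ hμ) hM
    windowMin_le_self self_le_windowMax, fun m => hl_eq ▸ le_ciSup hbdd m⟩

end AveragingRecurrence

theorem pos_of_recurrence {k : ℕ} {b F : ℕ → ℕ} (hb0 : 0 < b 0) (hFk : 0 < F k)
    (hFrec : ∀ m, k < m → F m = ∑ j ∈ range (k + 1), b j * F (m - (j + 1))) :
    ∀ m, k ≤ m → 0 < F m := by
  intro m
  induction m using Nat.strong_induction_on with
  | _ m ih =>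
    intro hm
    rcases hm.eq_or_lt with rfl | hkm
    · exact hFk
    · rw [hFrec m hkm]
      exact sum_pos' (fun _ _ => Nat.zero_le _)
        ⟨0, by simp, Nat.mul_pos hb0 (ih (m - 1) (by omega) (by omega))⟩

theorem averagingRecurrence_div_pow {k : ℕ} {a x : ℕ → ℝ} {r : ℝ} (hr : 0 < r)
    (ha : ∀ j, 0 ≤ a j) (hroot : r ^ (k + 1) = ∑ j ∈ range (k + 1), a j * r ^ (k - j))
    (hx : ∀ n, k < n → x n = ∑ j ∈ range (k + 1), a j * x (n - (j + 1))) :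
    AveragingRecurrence k (fun j => a j / r ^ (j + 1)) (fun m => x m / r ^ m) where
  nonneg j _ := by have := ha j; positivity
  sum_eq_one := by
    calc ∑ j ∈ range (k + 1), a j / r ^ (j + 1)
        = ∑ j ∈ range (k + 1), a j * r ^ (k - j) / r ^ (k + 1) := sum_congr rfl fun j hj => by
          have hjk : k - j + (j + 1) = k + 1 := by simp at hj; omega
          rw [← hjk, pow_add r (k - j), mul_comm (r ^ (k - j)),
            mul_div_mul_right _ _ (pow_pos hr _).ne']
      _ = 1 := by rw [← sum_div, ← hroot, div_self (pow_pos hr _).ne']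
  apply_eq n hn := by
    rw [hx n hn, sum_div]
    refine sum_congr rfl fun j hj => ?_
    have hjn : j + 1 + (n - (j + 1)) = n := by simp at hj; omega
    rw [div_mul_div_comm, ← pow_add, hjn, mul_div_assoc]

theorem tendsto_div_of_tendsto_div_pow {x : ℕ → ℝ} {r L : ℝ} (hr : r ≠ 0) (hL : L ≠ 0)
    (hx : Tendsto (fun m => x m / r ^ m) atTop (𝓝 L)) :
    Tendsto (fun m => x (m + 1) / x m) atTop (𝓝 r) := by
  have key : ∀ m, x (m + 1) / x m = r * ((x (m + 1) / r ^ (m + 1)) / (x m / r ^ m)) := by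
    intro m
    rw [div_div_div_eq, pow_succ]
    field_simp
  simpa [key, div_self hL] using ((hx.comp (tendsto_add_atTop_nat 1)).div hx hL).const_mul r

theorem beta_fibonacci_ratio_tendsto_root_general (k : ℕ)
    (b : ℕ → ℕ) (hb0 : b 0 = 1)
    (F : ℕ → ℕ) (hFk : F k = 1)
    (hFrec : ∀ m, k < m → F m = ∑ j ∈ Finset.range (k+1), b j * F (m - (j+1)))
    (r : ℝ) (hr : 0 < r)
    (hroot : r ^ (k+1) = ∑ j ∈ Finset.range (k+1), (b j : ℝ) * r ^ (k - j)) :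
    (∀ m, k ≤ m → 0 < F m) ∧
      Tendsto (fun m : ℕ => (F (m+1) : ℝ) / (F m : ℝ)) atTop (nhds r) := by
  have hFpos := pos_of_recurrence (by omega) (by omega) hFrec
  refine ⟨hFpos, ?_⟩
  have havg := averagingRecurrence_div_pow (x := fun m => (F m : ℝ)) hr
    (fun j => (b j).cast_nonneg) hroot
    fun n hn => by rw [hFrec n hn]; push_cast; rfl
  obtain ⟨L, hL, hminL⟩ := havg.exists_tendsto (by simp [hb0, hr])
  have hwindow : 0 < windowMin (fun m => (F m : ℝ) / r ^ m) k k :=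
    lt_inf'_iff _ |>.2 fun i _ =>
      div_pos (by exact_mod_cast hFpos (k + i) (by omega)) (pow_pos hr _)
  exact tendsto_div_of_tendsto_div_pow hr.ne' (hwindow.trans_le (hminL k)).ne' hL

/-- ratios of consecutive beta-Fibonacci numbers converge to the unique
positive real root of the associated β-polynomial. -/
theorem beta_fibonacci_ratio_tendsto_root (k : ℕ) (hk : 1 ≤ k)
    (b : ℕ → ℕ) (hb : ∀ j, j ≤ k → b j = 0 ∨ b j = 1) (hb0 : b 0 = 1) (hbk : b k = 1)
    (F : ℕ → ℕ) (hF0 : ∀ m, m < k → F m = 0) (hFk : F k = 1)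
    (hFrec : ∀ m, k < m → F m = ∑ j ∈ Finset.range (k+1), b j * F (m - (j+1)))
    (r : ℝ) (hr : 0 < r)
    (hroot : r ^ (k+1) = ∑ j ∈ Finset.range (k+1), (b j : ℝ) * r ^ (k - j)) :
    (∀ m, k ≤ m → 0 < F m) ∧
      Tendsto (fun m : ℕ => (F (m+1) : ℝ) / (F m : ℝ)) atTop (nhds r) :=
  beta_fibonacci_ratio_tendsto_root_general k b hb0 F hFk hFrec r hr hroot
end

section
/- The orbit encoding of the midpoint recovers β: for every real β with 1 < β ≤ 2, letting b_n = 1 if T_β^n(β/2) ≥ 1/2 and b_n = 0 otherwise, one has β = Σ_{n=0}^∞ b_n · β^{−n}. -/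
/-- the orbit encoding of the midpoint recovers β:
with `b_n = 1` iff `T_β^n(β/2) ≥ 1/2`, one has `β = Σ_n b_n β^{-n}`. -/
theorem midpoint_orbit_encoding_recovers_beta (β : ℝ) (hβ1 : 1 < β) (hβ2 : β ≤ 2) :
    β = ∑' n : ℕ,
      (if (1:ℝ)/2 ≤ (betaShift β)^[n] (β/2) then (1:ℝ) else 0) / β ^ n := by
  have hβ0 : (0:ℝ) < β := by linarith
  set x : ℕ → ℝ := fun n => (betaShift β)^[n] (β/2) with hx
  set b : ℕ → ℝ := fun n => if (1:ℝ)/2 ≤ x n then (1:ℝ) else 0 with hb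
  have hb01 : ∀ n, 0 ≤ b n ∧ b n ≤ 1 := by
    intro n; simp only [hb]; split <;> norm_num
  have hxsucc : ∀ n, x (n+1) = β * (x n - b n / 2) := by
    intro n
    have h1 : x (n+1) = betaShift β (x n) := by
      simp [hx, Function.iterate_succ_apply']
    rw [h1, betaShift]
    by_cases h : x n < 1/2
    · simp only [hb, if_pos h, if_neg (not_le.mpr h)]; ring
    · simp only [hb, if_neg h, if_pos (not_lt.mp h)]
  have hbound : ∀ n, 0 ≤ x n ∧ x n ≤ 1 := by
    intro n
    induction n with
    | zero =>
      constructor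
      · simp only [hx, Function.iterate_zero_apply]; linarith
      · simp only [hx, Function.iterate_zero_apply]; linarith
    | succ n ih =>
      rw [hxsucc n]
      by_cases h : (1:ℝ)/2 ≤ x n
      · simp only [hb, if_pos h]
        constructor <;> nlinarith [ih.1, ih.2]
      · simp only [hb, if_neg h]
        push_neg at h
        constructor <;> nlinarith [ih.1, ih.2]
  have key : ∀ N, β = (∑ n ∈ Finset.range N, b n / β ^ n) + 2 * x N / β ^ N := by
    intro N
    induction N with
    | zero =>
      simp only [Finset.range_zero, Finset.sum_empty, pow_zero, hx,
        Function.iterate_zero_apply]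
      ring
    | succ N ih =>
      rw [Finset.sum_range_succ, hxsucc N]
      have hpow : (β : ℝ) ^ N ≠ 0 := by positivity
      have h2 : 2 * (β * (x N - b N / 2)) / β ^ (N+1)
          = 2 * x N / β ^ N - b N / β ^ N := by
        field_simp; ring
      rw [h2]
      linarith [ih]
  have hsummable : Summable (fun n : ℕ => b n / β ^ n) := by
    apply Summable.of_nonneg_of_le
      (fun n => div_nonneg (hb01 n).1 (by positivity))
      (fun n => ?_)
      (summable_geometric_of_lt_one (le_of_lt (by positivity : (0:ℝ) < 1/β))
        (by rw [div_lt_one hβ0]; exact hβ1))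
    rw [div_pow, one_pow]
    exact div_le_div_of_nonneg_right (hb01 n).2 (by positivity) |>.trans_eq rfl
  have htail : Filter.Tendsto (fun N : ℕ => 2 * x N / β ^ N) Filter.atTop (nhds 0) := by
    have h0 : Filter.Tendsto (fun N : ℕ => 2 * (1/β) ^ N) Filter.atTop (nhds 0) := by
      have := tendsto_pow_atTop_nhds_zero_of_lt_one
        (le_of_lt (by positivity : (0:ℝ) < 1/β))
        (by rw [div_lt_one hβ0]; exact hβ1)
      simpa using this.const_mul 2
    apply squeeze_zero (fun N => by have := (hbound N).1; positivity) (fun N => ?_) h0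
    rw [div_pow, one_pow, mul_div_assoc]
    exact mul_le_mul_of_nonneg_left
      (div_le_div_of_nonneg_right (hbound N).2 (by positivity)) (by norm_num)
  have hhs : HasSum (fun n : ℕ => b n / β ^ n) β := by
    rw [hsummable.hasSum_iff_tendsto_nat]
    have heq : (fun N : ℕ => ∑ n ∈ Finset.range N, b n / β ^ n)
        = fun N : ℕ => β - 2 * x N / β ^ N := by
      funext N; linarith [key N]
    rw [heq]
    simpa using (Filter.Tendsto.const_sub β htail)
  exact hhs.tsum_eq.symm
end

section
/- The Gelfond–Parry measure is invariant for the β-transformation: let 1 < β < 2 and let t_β : [0,1) → [0,1) be t_β(x) = βx mod 1 (the fractional part of βx). Define the orbit u_0 = 1, u_{n+1} = fractional part of β·u_n, and the density h : [0,1) → ℝ by h(y) = Σ_{n=0}^∞ β^{−n} · 𝟙[y < u_n]. Then the measure μ on [0,1) with density h with respect to Lebesgue measure is t_β-invariant: μ(t_β^{−1}(A)) = μ(A) for every Borel set A ⊆ [0,1). -/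
/-!
Writing `h = ∑ β⁻ⁿ 𝟙[0, uₙ)`, the measure `μ` is `∑ β⁻ⁿ λ|[0, uₙ)`. For `A ⊆ [0, 1)` and `βc < 2`,
the set `t_β⁻¹ A ∩ [0, c)` consists of two affine copies of pieces of `A` (where `⌊βx⌋ = 0` and
where `⌊βx⌋ = 1`), which gives `λ(t_β⁻¹ A ∩ [0, c)) = β⁻¹ (⌊βc⌋ λ(A) + λ(A ∩ [0, {βc})))`.
For `c = uₙ` we have `{βc} = uₙ₊₁`, so
`μ(t_β⁻¹ A) = (∑ β⁻⁽ⁿ⁺¹⁾ ⌊βuₙ⌋) λ(A) + ∑ β⁻⁽ⁿ⁺¹⁾ λ(A ∩ [0, uₙ₊₁))`.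
The first sum telescopes to `u₀ = 1` (it is the greedy β-expansion of `1`), and the second is
`μ(A)` without its `n = 0` term `λ(A ∩ [0, 1)) = λ(A)`.
-/

open MeasureTheory Set Filter

lemma orbit_mem_Icc {β : ℝ} {u : ℕ → ℝ} (hu : ∀ n, u (n + 1) = Int.fract (β * u n))
    (hu0 : u 0 ∈ Icc 0 1) (n : ℕ) : u n ∈ Icc 0 1 := by
  cases n with
  | zero => exact hu0
  | succ n => rw [hu n]; exact ⟨Int.fract_nonneg _, (Int.fract_lt_one _).le⟩

lemma hasSum_floor_mul_orbit {β : ℝ} (hβ : 1 < β) {u : ℕ → ℝ}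
    (hu : ∀ n, u (n + 1) = Int.fract (β * u n)) (hu0 : u 0 ∈ Icc 0 1) :
    HasSum (fun n => β⁻¹ ^ (n + 1) * ⌊β * u n⌋₊) (u 0) := by
  have hβ0 : 0 < β := one_pos.trans hβ
  have hmem := orbit_mem_Icc hu hu0
  have hstep (n : ℕ) :
      β⁻¹ ^ (n + 1) * ⌊β * u n⌋₊ = β⁻¹ ^ n * u n - β⁻¹ ^ (n + 1) * u (n + 1) := by
    rw [natCast_floor_eq_intCast_floor (by nlinarith [(hmem n).1]), ← Int.self_sub_fract,
      ← hu, pow_succ]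
    field_simp
  have hpartial (N : ℕ) :
      ∑ n ∈ Finset.range N, β⁻¹ ^ (n + 1) * ⌊β * u n⌋₊ = u 0 - β⁻¹ ^ N * u N := by
    simp only [hstep, Finset.sum_range_sub', pow_zero, one_mul]
  rw [hasSum_iff_tendsto_nat_of_nonneg (fun n => by positivity)]
  simp only [hpartial]
  have hgeom : Tendsto (fun N => β⁻¹ ^ N) atTop (nhds 0) :=
    tendsto_pow_atTop_nhds_zero_of_lt_one (by positivity) (inv_lt_one_of_one_lt₀ hβ)
  have hrem : Tendsto (fun N => β⁻¹ ^ N * u N) atTop (nhds 0) :=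
    squeeze_zero (fun N => mul_nonneg (by positivity) (hmem N).1)
      (fun N => mul_le_of_le_one_right (by positivity) (hmem N).2) hgeom
  simpa using hrem.const_sub (u 0)

lemma tsum_ofReal_inv_pow_mul_floor_mul_orbit {β : ℝ} (hβ : 1 < β) {u : ℕ → ℝ}
    (hu : ∀ n, u (n + 1) = Int.fract (β * u n)) (hu0 : u 0 ∈ Icc 0 1) :
    ∑' n, ENNReal.ofReal β⁻¹ ^ (n + 1) * ⌊β * u n⌋₊ = ENNReal.ofReal (u 0) := by
  have hsum := hasSum_floor_mul_orbit hβ hu hu0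
  have hβinv : 0 ≤ β⁻¹ := inv_nonneg.2 (one_pos.trans hβ).le
  rw [← hsum.tsum_eq, ENNReal.ofReal_tsum_of_nonneg (fun n => by positivity) hsum.summable]
  simp only [ENNReal.ofReal_mul (pow_nonneg hβinv _), ENNReal.ofReal_pow hβinv,
    ENNReal.ofReal_natCast]

lemma fract_mem_iff_of_subset_Ico {A : Set ℝ} (hA : A ⊆ Ico 0 1) {z : ℝ} (hz0 : 0 ≤ z)
    (hz2 : z < 2) : Int.fract z ∈ A ↔ z ∈ A ∨ z - 1 ∈ A := by
  rcases lt_or_ge z 1 with hz1 | hz1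
  · rw [Int.fract_eq_self.2 ⟨hz0, hz1⟩]
    exact ⟨Or.inl, fun h => h.resolve_right fun h' => (hA h').1.not_gt (by linarith)⟩
  · rw [← Int.fract_sub_one, Int.fract_eq_self.2 ⟨by linarith, by linarith⟩]
    exact ⟨Or.inr, fun h => h.resolve_left fun h' => (hA h').2.not_ge hz1⟩

lemma measure_inter_Iio_add_measure_inter_Iio_sub_one (μ : Measure ℝ) {A : Set ℝ}
    (hA : A ⊆ Ico 0 1) {z : ℝ} (hz0 : 0 ≤ z) (hz2 : z < 2) :
    μ (A ∩ Iio z) + μ (A ∩ Iio (z - 1)) = ⌊z⌋₊ * μ A + μ (A ∩ Iio (Int.fract z)) := by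
  rcases lt_or_ge z 1 with hz1 | hz1
  · have hempty : A ∩ Iio (z - 1) = ∅ :=
      eq_empty_of_forall_notMem fun x hx => (hA hx.1).1.not_gt (by linarith [hx.2.out])
    rw [hempty, Nat.floor_eq_zero.2 hz1, Int.fract_eq_self.2 ⟨hz0, hz1⟩]
    simp
  · have hfloor : ⌊z⌋₊ = 1 :=
      (Nat.floor_eq_iff hz0).2 ⟨by simpa using hz1, by norm_num; linarith⟩
    have hall : A ∩ Iio z = A := inter_eq_left.2 fun x hx => (hA hx).2.trans_le hz1
    rw [hall, hfloor, ← Int.fract_sub_one, Int.fract_eq_self.2 ⟨by linarith, by linarith⟩]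
    simp

lemma volume_preimage_fract_mul_inter_Ico_eq_add {β : ℝ} (hβ : 0 < β) {A : Set ℝ}
    (hAm : MeasurableSet A) (hA : A ⊆ Ico 0 1) {c : ℝ} (hc : β * c ≤ 2) :
    volume ((fun x => Int.fract (β * x)) ⁻¹' A ∩ Ico 0 c) =
      ENNReal.ofReal β⁻¹ * (volume (A ∩ Iio (β * c)) + volume (A ∩ Iio (β * c - 1))) := by
  -- `x - 1` is written `x + -1` so that `measure_preimage_add_right` applies.
  have hsplit : (fun x => Int.fract (β * x)) ⁻¹' A ∩ Ico 0 c =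
      (β * ·) ⁻¹' (A ∩ Iio (β * c)) ∪ (β * ·) ⁻¹' ((· + -1) ⁻¹' (A ∩ Iio (β * c - 1))) := by
    ext x
    simp only [mem_inter_iff, mem_preimage, mem_Ico, mem_union, mem_Iio, ← sub_eq_add_neg,
      sub_lt_sub_iff_right, mul_lt_mul_iff_right₀ hβ]
    constructor
    · rintro ⟨hx, hx0, hxc⟩
      have := (fract_mem_iff_of_subset_Ico hA (by positivity) (by nlinarith)).1 hx
      tauto
    · rintro (⟨hx, hxc⟩ | ⟨hx, hxc⟩)
      · have := hA hx
        refine ⟨(fract_mem_iff_of_subset_Ico hA this.1 (by linarith [this.2])).2 (Or.inl hx),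
          nonneg_of_mul_nonneg_right this.1 hβ, hxc⟩
      · have := hA hx
        refine ⟨(fract_mem_iff_of_subset_Ico hA (by linarith [this.1]) (by linarith [this.2])).2
          (Or.inr hx), ?_, hxc⟩
        nlinarith [this.1]
  have hdisj : Disjoint ((β * ·) ⁻¹' (A ∩ Iio (β * c)))
      ((β * ·) ⁻¹' ((· + -1) ⁻¹' (A ∩ Iio (β * c - 1)))) :=
    disjoint_left.2 fun x h1 h2 => (hA h1.1).2.not_ge (by linarith [(hA h2.1).1])
  have hm : MeasurableSet ((β * ·) ⁻¹' ((· + -1) ⁻¹' (A ∩ Iio (β * c - 1)))) :=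
    measurableSet_preimage (measurable_const_mul β) <|
      measurableSet_preimage (measurable_add_const _) (hAm.inter measurableSet_Iio)
  rw [hsplit, measure_union hdisj hm, Real.volume_preimage_mul_left hβ.ne',
    Real.volume_preimage_mul_left hβ.ne', measure_preimage_add_right, abs_of_pos (inv_pos.2 hβ),
    mul_add]

lemma volume_preimage_fract_mul_inter_Ico {β : ℝ} (hβ : 0 < β) {A : Set ℝ}
    (hAm : MeasurableSet A) (hA : A ⊆ Ico 0 1) {c : ℝ} (hc0 : 0 ≤ c) (hc : β * c < 2) :
    volume ((fun x => Int.fract (β * x)) ⁻¹' A ∩ Ico 0 c) =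
      ENNReal.ofReal β⁻¹ * (⌊β * c⌋₊ * volume A + volume (A ∩ Iio (Int.fract (β * c)))) := by
  rw [volume_preimage_fract_mul_inter_Ico_eq_add hβ hAm hA hc.le,
    measure_inter_Iio_add_measure_inter_Iio_sub_one _ hA (by positivity) hc]

lemma withDensity_ofReal_tsum_mul_ite_lt_apply (ν : Measure ℝ) {a c : ℕ → ℝ}
    (ha : ∀ n, 0 ≤ a n) (hsum : Summable a) {S : Set ℝ} (hS : MeasurableSet S) :
    ν.withDensity (fun y => ENNReal.ofReal (∑' n, a n * if y < c n then (1 : ℝ) else 0)) S =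
      ∑' n, ENNReal.ofReal (a n) * ν (S ∩ Iio (c n)) := by
  have hterm (y : ℝ) (n : ℕ) : ENNReal.ofReal (a n * if y < c n then (1 : ℝ) else 0) =
      ENNReal.ofReal (a n) * (Iio (c n)).indicator 1 y := by
    by_cases hy : y < c n <;> simp [hy]
  have hdensity (y : ℝ) : ENNReal.ofReal (∑' n, a n * if y < c n then (1 : ℝ) else 0) =
      ∑' n, ENNReal.ofReal (a n) * (Iio (c n)).indicator 1 y := by
    rw [ENNReal.ofReal_tsum_of_nonneg (fun n => mul_nonneg (ha n) (by split_ifs <;> norm_num))]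
    · simp only [hterm]
    · exact hsum.of_nonneg_of_le (fun n => mul_nonneg (ha n) (by split_ifs <;> norm_num))
        (fun n => mul_le_of_le_one_right (ha n) (by split_ifs <;> norm_num))
  have hind (n : ℕ) : Measurable ((Iio (c n)).indicator (1 : ℝ → ENNReal)) :=
    measurable_one.indicator measurableSet_Iio
  simp only [withDensity_apply _ hS, hdensity]
  rw [lintegral_tsum fun n => ((hind n).const_mul _).aemeasurable]
  refine tsum_congr fun n => ?_
  rw [lintegral_const_mul _ (hind n), lintegral_indicator_one measurableSet_Iio,
    Measure.restrict_apply measurableSet_Iio, inter_comm]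

lemma restrict_Ico_withDensity_ofReal_tsum_geometric_apply {β : ℝ} (hβ : 1 < β) (c : ℕ → ℝ)
    {S : Set ℝ} (hS : MeasurableSet S) :
    (volume.restrict (Ico 0 1)).withDensity
        (fun y => ENNReal.ofReal (∑' n : ℕ, (1 / β ^ n) * if y < c n then (1 : ℝ) else 0)) S =
      ∑' n, ENNReal.ofReal β⁻¹ ^ n * volume (S ∩ Ico 0 1 ∩ Iio (c n)) := by
  have hβinv : 0 ≤ β⁻¹ := inv_nonneg.2 (one_pos.trans hβ).le
  have hsum : Summable fun n : ℕ => 1 / β ^ n := by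
    simpa only [one_div, inv_pow] using
      summable_geometric_of_lt_one hβinv (inv_lt_one_of_one_lt₀ hβ)
  rw [withDensity_ofReal_tsum_mul_ite_lt_apply _ (fun n => by positivity) hsum hS]
  simp only [one_div, ← inv_pow, ENNReal.ofReal_pow hβinv,
    Measure.restrict_apply' measurableSet_Ico, inter_right_comm]

/-- the Gelfond–Parry measure, with density
`h(y) = Σ_n β^{-n} 𝟙[y < u_n]` (where `u_0 = 1`, `u_{n+1} = fract(β u_n)`) with respect to
Lebesgue measure on `[0,1)`, is invariant for the β-transformation `t_β(x) = βx mod 1`. -/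
theorem gelfond_parry_measure_invariant (β : ℝ) (hβ1 : 1 < β) (hβ2 : β < 2)
    (u : ℕ → ℝ) (hu0 : u 0 = 1) (hu : ∀ n : ℕ, u (n+1) = Int.fract (β * u n))
    (h : ℝ → ℝ) (hh : ∀ y : ℝ, h y = ∑' n : ℕ, (1/β^n) * (if y < u n then (1:ℝ) else 0))
    (μ : Measure ℝ)
    (hμ : μ = (volume.restrict (Set.Ico (0:ℝ) 1)).withDensity
        (fun y => ENNReal.ofReal (h y))) :
    ∀ A : Set ℝ, MeasurableSet A → A ⊆ Set.Ico (0:ℝ) 1 →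
      μ ((fun x : ℝ => Int.fract (β * x)) ⁻¹' A) = μ A := by
  intro A hA hA1
  have hβ0 : 0 < β := one_pos.trans hβ1
  have hmem := orbit_mem_Icc hu (by simp [hu0])
  set q := ENNReal.ofReal β⁻¹
  have hμS (S : Set ℝ) (hS : MeasurableSet S) :
      μ S = ∑' n, q ^ n * volume (S ∩ Ico 0 1 ∩ Iio (u n)) := by
    simp only [hμ, hh, restrict_Ico_withDensity_ofReal_tsum_geometric_apply hβ1 u hS, q]
  have hdigits : ∑' n, q ^ (n + 1) * ⌊β * u n⌋₊ = 1 := by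
    simpa [hu0] using tsum_ofReal_inv_pow_mul_floor_mul_orbit hβ1 hu (hmem 0)
  have hpreimage (n : ℕ) : volume ((fun x => Int.fract (β * x)) ⁻¹' A ∩ Ico 0 1 ∩ Iio (u n)) =
      q * (⌊β * u n⌋₊ * volume A + volume (A ∩ Iio (u (n + 1)))) := by
    rw [inter_assoc, Ico_inter_Iio, min_eq_right (hmem n).2, hu,
      volume_preimage_fract_mul_inter_Ico hβ0 hA hA1 (hmem n).1
        (by nlinarith [(hmem n).1, (hmem n).2])]
  have hTA : MeasurableSet ((fun x => Int.fract (β * x)) ⁻¹' A) :=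
    measurable_fract.comp (measurable_const_mul β) hA
  calc μ ((fun x => Int.fract (β * x)) ⁻¹' A)
      = ∑' n, (q ^ (n + 1) * ⌊β * u n⌋₊ * volume A +
          q ^ (n + 1) * volume (A ∩ Iio (u (n + 1)))) := by
        simp only [hμS _ hTA, hpreimage, pow_succ, mul_add, mul_assoc]
    _ = volume (A ∩ Iio (u 0)) + ∑' n, q ^ (n + 1) * volume (A ∩ Iio (u (n + 1))) := by
        rw [ENNReal.tsum_add, ENNReal.tsum_mul_right, hdigits, one_mul, hu0,
          (inter_eq_left.2 fun x hx => (hA1 hx).2 : A ∩ Iio (1 : ℝ) = A)]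
    _ = μ A := by
        rw [hμS A hA, inter_eq_left.2 hA1,
          tsum_eq_zero_add' (f := fun n => q ^ n * volume (A ∩ Iio (u n))) ENNReal.summable,
          pow_zero, one_mul]
end
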